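/- Let the parameters of H(m,1,n) satisfy the restrictions, let ρ be a C-representation of H(m,1,n) on a finite-dimensional ℂ-vector space V, and let e ∈ V be a nonzero vector with ρ(J_i)e = a_i·e for all i = 1, …, n. Then for each i = 1, …, n there exist k ∈ {1,…,m} and an integer z with 1−i ≤ z ≤ i−1 such that a_i = v_k·q^{2z}. -/

import Mathlib

/-!
Induction on `i`, for all common eigenvectors at once. `J_1 = τ` is annihilated by
`∏ₖ (X - v_k)`, so its eigenvalue is some `v_k`. For the step write `S = ρ(σ_i)` and
`A = ρ(J_i)`, so that `ρ(J_{i+1}) = S A S` and `S² = (q - q⁻¹) S + 1`. If `e` is an eigenvector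
of `S`, its eigenvalue is `q` or `-q⁻¹`, whence `a_{i+1} = q^{±2} a_i`. Otherwise, unless
`a_{i+1} = a_i`, the nonzero vector `S e + t e` with `t = (q - q⁻¹) a_{i+1} / (a_i - a_{i+1})`
is an `a_{i+1}`-eigenvector of `A`, and still an `a_k`-eigenvector of `J_k` for `k < i` because
`σ_i` commutes with those; the induction hypothesis applied to it puts `a_{i+1}` in the
level-`i` set.
-/

open Classical

noncomputable section

namespace CHA

abbrev Gen (n : ℕ) := Unit ⊕ Fin (n - 1)
def fτ (n : ℕ) : FreeAlgebra ℂ (Gen n) := FreeAlgebra.ι ℂ (Sum.inl ())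
def fσ (n : ℕ) (i : Fin (n - 1)) : FreeAlgebra ℂ (Gen n) := FreeAlgebra.ι ℂ (Sum.inr i)
inductive Rel (m n : ℕ) (q : ℂ) (v : Fin m → ℂ) :
    FreeAlgebra ℂ (Gen n) → FreeAlgebra ℂ (Gen n) → Prop
  | braid (i j : Fin (n - 1)) (hij : (i : ℕ) + 1 = (j : ℕ)) :
      Rel m n q v (fσ n i * fσ n j * fσ n i) (fσ n j * fσ n i * fσ n j)
  | comm (i j : Fin (n - 1)) (hij : (i : ℕ) + 1 < (j : ℕ)) :
      Rel m n q v (fσ n i * fσ n j) (fσ n j * fσ n i)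
  | quad (i : Fin (n - 1)) :
      Rel m n q v (fσ n i * fσ n i) ((q - q⁻¹) • fσ n i + 1)
  | reflection (i : Fin (n - 1)) (hi : (i : ℕ) = 0) :
      Rel m n q v (fτ n * fσ n i * (fτ n * fσ n i)) (fσ n i * fτ n * (fσ n i * fτ n))
  | taucomm (i : Fin (n - 1)) (hi : 0 < (i : ℕ)) :
      Rel m n q v (fτ n * fσ n i) (fσ n i * fτ n)
  | cyclotomic :
      Rel m n q v ((List.ofFn fun k : Fin m =>
        fτ n - algebraMap ℂ (FreeAlgebra ℂ (Gen n)) (v k)).prod) 0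
abbrev Hecke (m n : ℕ) (q : ℂ) (v : Fin m → ℂ) := RingQuot (Rel m n q v)
def τgen (m n : ℕ) (q : ℂ) (v : Fin m → ℂ) : Hecke m n q v :=
  RingQuot.mkAlgHom ℂ (Rel m n q v) (fτ n)
def σgen (m n : ℕ) (q : ℂ) (v : Fin m → ℂ) (i : Fin (n - 1)) : Hecke m n q v :=
  RingQuot.mkAlgHom ℂ (Rel m n q v) (fσ n i)
def σN (m n : ℕ) (q : ℂ) (v : Fin m → ℂ) (k : ℕ) : Hecke m n q v :=
  if h : k < n - 1 then σgen m n q v ⟨k, h⟩ else 1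
def JMn (m n : ℕ) (q : ℂ) (v : Fin m → ℂ) : ℕ → Hecke m n q v
  | 0 => τgen m n q v
  | k + 1 => σN m n q v k * JMn m n q v k * σN m n q v k
def JM (m n : ℕ) (q : ℂ) (v : Fin m → ℂ) (i : Fin n) : Hecke m n q v :=
  JMn m n q v i.val
def Restrictions (m n : ℕ) (q : ℂ) (v : Fin m → ℂ) : Prop :=
  (∀ N : ℕ, 1 ≤ N → N < n → (∑ j ∈ Finset.range (N + 1), q ^ (2 * j)) ≠ 0) ∧
  (∀ j k : Fin m, j ≠ k → ∀ i : ℤ, -(n : ℤ) < i → i < (n : ℤ) → q ^ (2 * i) * v j ≠ v k) ∧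
  (∀ j, v j ≠ 0)

section Rep

variable {m n : ℕ} {q : ℂ} {v : Fin m → ℂ}
variable {V : Type*} [AddCommGroup V] [Module ℂ V]

/-- A linear operator is diagonalizable iff its eigenspaces span. -/
def Diagonalizable (f : Module.End ℂ V) : Prop := (⨆ c : ℂ, f.eigenspace c) = ⊤

/-- A subspace is invariant under a set of operators. -/
def InvariantUnder (S : Set (Module.End ℂ V)) (p : Submodule ℂ V) : Prop :=
  ∀ T ∈ S, ∀ x ∈ p, T x ∈ p

/-- `V` is completely reducible under the (sub)algebra generated by the operators in `S`:
every `S`-invariant subspace has an `S`-invariant complement. -/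
def CompletelyReducible (S : Set (Module.End ℂ V)) : Prop :=
  ∀ p : Submodule ℂ V, InvariantUnder S p → ∃ p', InvariantUnder S p' ∧ IsCompl p p'

/-- A `C`-representation of `H(m,1,n)`: all Jucys–Murphy operators are diagonalizable and,
for each `i = 1,…,n−1`, the action of the subalgebra generated by `J_i`, `J_{i+1}`, `σ_i`
is completely reducible. -/
def IsCRep (ρ : Hecke m n q v →ₐ[ℂ] Module.End ℂ V) : Prop :=
  (∀ i : Fin n, Diagonalizable (ρ (JM m n q v i))) ∧
  ∀ i : Fin (n - 1),
    CompletelyReducible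
      {ρ (JM m n q v ⟨i.val, by have := i.isLt; omega⟩),
       ρ (JM m n q v ⟨i.val + 1, by have := i.isLt; omega⟩),
       ρ (σgen m n q v i)}

end Rep

open Polynomial

section LinearAlgebra

variable {K V : Type*} [Field K] [AddCommGroup V] [Module K V]

lemma eval_eq_zero_of_aeval_eq_zero {f : Module.End K V} {p : K[X]} (hp : aeval f p = 0)
    {x : V} (hx0 : x ≠ 0) {μ : K} (hx : f x = μ • x) : p.eval μ = 0 := by
  have h := Module.End.aeval_apply_of_mem_apply_eq_smul (p := p) hx
  rw [hp, LinearMap.zero_apply, eq_comm, smul_eq_zero] at h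
  exact h.resolve_right hx0

variable {S A J : Module.End K V} {q : K} {e : V}

lemma eq_or_eq_neg_inv_of_apply_eq_smul (hq : q ≠ 0) (hS : S * S = (q - q⁻¹) • S + 1)
    (he : e ≠ 0) {d : K} (hd : S e = d • e) : d = q ∨ d = -q⁻¹ := by
  have hquad : (d * d) • e = ((q - q⁻¹) * d + 1) • e := by
    have h := congrArg (· e) hS
    simp only [Module.End.mul_apply, LinearMap.add_apply, LinearMap.smul_apply,
      Module.End.one_apply, hd, map_smul, smul_smul] at h
    rwa [add_smul, one_smul]
  have hfac : (d - q) * (d + q⁻¹) = 0 := by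
    linear_combination smul_left_injective K he hquad - mul_inv_cancel₀ hq
  rcases mul_eq_zero.mp hfac with h | h
  · exact .inl (sub_eq_zero.mp h)
  · exact .inr (eq_neg_of_add_eq_zero_left h)

lemma apply_conj_eigenvector_eq_smul (hS : S * S = (q - q⁻¹) • S + 1) {a b : K}
    (hA : A e = a • e) (hB : (S * A * S) e = b • e) (hab : a ≠ b) :
    A (S e + ((q - q⁻¹) * b / (a - b)) • e) = b • (S e + ((q - q⁻¹) * b / (a - b)) • e) := by
  set t := (q - q⁻¹) * b / (a - b)
  have ht : t * (a - b) = (q - q⁻¹) * b := div_mul_cancel₀ _ (sub_ne_zero.mpr hab)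
  have hASe : A (S e) = b • S e - ((q - q⁻¹) * b) • e := by
    have h := congrArg (· (A (S e))) hS
    simp only [Module.End.mul_apply, LinearMap.add_apply, LinearMap.smul_apply,
      Module.End.one_apply] at h hB
    rw [hB, map_smul, smul_smul] at h
    rw [h]
    abel
  rw [map_add, map_smul, hASe, hA, smul_add, smul_smul, smul_smul,
    show t * a = b * t + (q - q⁻¹) * b by linear_combination ht, add_smul]
  abel

lemma apply_add_smul_eq_smul_of_commute (hJ : Commute S J) {c : K} (hJe : J e = c • e)
    (t : K) : J (S e + t • e) = c • (S e + t • e) := by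
  rw [map_add, map_smul, ← Module.End.mul_apply, ← hJ.eq, Module.End.mul_apply, hJe,
    map_smul, smul_add, smul_comm t c]

end LinearAlgebra

section Relations

variable {m n : ℕ} {q : ℂ} {v : Fin m → ℂ}

lemma σgen_mul_self (i : Fin (n - 1)) :
    σgen m n q v i * σgen m n q v i = (q - q⁻¹) • σgen m n q v i + 1 := by
  simpa [σgen] using RingQuot.mkAlgHom_rel ℂ (Rel.quad (m := m) (q := q) (v := v) i)

lemma commute_σgen_τgen (i : Fin (n - 1)) (hi : 0 < (i : ℕ)) :
    Commute (σgen m n q v i) (τgen m n q v) := by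
  simpa [Commute, SemiconjBy, τgen, σgen, eq_comm] using
    RingQuot.mkAlgHom_rel ℂ (Rel.taucomm (m := m) (q := q) (v := v) i hi)

lemma commute_σgen_σgen (i j : Fin (n - 1)) (hij : (i : ℕ) + 1 < (j : ℕ)) :
    Commute (σgen m n q v i) (σgen m n q v j) := by
  simpa [Commute, SemiconjBy, σgen] using
    RingQuot.mkAlgHom_rel ℂ (Rel.comm (m := m) (q := q) (v := v) i j hij)

lemma JMn_succ (i : Fin (n - 1)) :
    JMn m n q v (i + 1) = σgen m n q v i * JMn m n q v i * σgen m n q v i := by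
  simp [JMn, σN]

lemma commute_σgen_JMn (i : Fin (n - 1)) {k : ℕ} (hk : k < i) :
    Commute (σgen m n q v i) (JMn m n q v k) := by
  induction k with
  | zero => exact commute_σgen_τgen i hk
  | succ k ih =>
    let i' : Fin (n - 1) := ⟨k, by omega⟩
    have hσ : Commute (σgen m n q v i) (σgen m n q v i') := (commute_σgen_σgen i' i hk).symm
    rw [show k + 1 = (i' : ℕ) + 1 from rfl, JMn_succ]
    exact (hσ.mul_right (ih (by omega))).mul_right hσ

lemma aeval_τgen_cyclotomic : aeval (τgen m n q v) (∏ k, (X - C (v k))) = 0 := by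
  have h := RingQuot.mkAlgHom_rel ℂ (Rel.cyclotomic (m := m) (n := n) (q := q) (v := v))
  rw [map_list_prod, map_zero, List.map_ofFn] at h
  rw [← List.prod_ofFn, map_list_prod, List.map_ofFn, ← h]
  congr 2
  funext k
  simp [τgen, fτ]

end Relations

section Eigenvalues

variable {m n : ℕ} {q : ℂ} {v : Fin m → ℂ}

def admissibleEigenvalues (q : ℂ) (v : Fin m → ℂ) (i : ℕ) : Set ℂ :=
  {x | ∃ (k : Fin m) (z : ℤ), -(i : ℤ) ≤ z ∧ z ≤ i ∧ x = v k * q ^ (2 * z)}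

lemma admissibleEigenvalues_subset_succ (i : ℕ) :
    admissibleEigenvalues q v i ⊆ admissibleEigenvalues q v (i + 1) := by
  rintro x ⟨k, z, hz₁, hz₂, rfl⟩
  exact ⟨k, z, by omega, by omega, rfl⟩

lemma mul_self_mul_mem_admissibleEigenvalues_succ (hq : q ≠ 0) {i : ℕ} {c x : ℂ}
    (hc : c = q ∨ c = -q⁻¹) (hx : x ∈ admissibleEigenvalues q v i) :
    c * c * x ∈ admissibleEigenvalues q v (i + 1) := by
  obtain ⟨k, z, hz₁, hz₂, rfl⟩ := hx
  rcases hc with rfl | rfl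
  · refine ⟨k, z + 1, by omega, by omega, ?_⟩
    rw [mul_add, mul_one, zpow_add₀ hq, zpow_two]
    ring
  · refine ⟨k, z - 1, by omega, by omega, ?_⟩
    rw [mul_sub, mul_one, zpow_sub₀ hq, zpow_two]
    ring

variable {V : Type*} [AddCommGroup V] [Module ℂ V] (ρ : Hecke m n q v →ₐ[ℂ] Module.End ℂ V)
  {e : V}

lemma eigenvalue_τgen_mem_admissibleEigenvalues (he : e ≠ 0) {c : ℂ}
    (hc : ρ (τgen m n q v) e = c • e) : c ∈ admissibleEigenvalues q v 0 := by
  have hroot := eval_eq_zero_of_aeval_eq_zero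
    (by rw [aeval_algHom_apply, aeval_τgen_cyclotomic, map_zero]) he hc
  rw [eval_prod, Finset.prod_eq_zero_iff] at hroot
  obtain ⟨k, -, hk⟩ := hroot
  refine ⟨k, 0, le_rfl, le_rfl, ?_⟩
  simpa [sub_eq_zero] using hk

theorem eigenvalue_JMn_mem_admissibleEigenvalues (hq : q ≠ 0) {i : ℕ} (hi : i < n)
    (he : e ≠ 0) (hcommon : ∀ k ≤ i, ∃ c : ℂ, ρ (JMn m n q v k) e = c • e) {c : ℂ}
    (hc : ρ (JMn m n q v i) e = c • e) : c ∈ admissibleEigenvalues q v i := by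
  induction i generalizing e c with
  | zero => exact eigenvalue_τgen_mem_admissibleEigenvalues ρ he hc
  | succ i ih =>
    obtain ⟨a, hA⟩ := hcommon i (by omega)
    let I : Fin (n - 1) := ⟨i, by omega⟩
    set S := ρ (σgen m n q v I)
    set A := ρ (JMn m n q v i)
    have hS : S * S = (q - q⁻¹) • S + 1 := by
      simpa using congrArg ρ (σgen_mul_self I)
    have hB : (S * A * S) e = c • e := by
      rwa [show i + 1 = (I : ℕ) + 1 from rfl, JMn_succ, map_mul, map_mul] at hc
    have ha : a ∈ admissibleEigenvalues q v i :=
      ih (by omega) he (fun k hk => hcommon k (by omega)) hA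
    by_cases hSe : ∃ d : ℂ, S e = d • e
    · obtain ⟨d, hd⟩ := hSe
      have hcda : c = d * d * a := smul_left_injective ℂ he <| by
        simp only [← hB, Module.End.mul_apply, hd, map_smul, hA, smul_smul]
        ring_nf
      rw [hcda]
      exact mul_self_mul_mem_admissibleEigenvalues_succ hq
        (eq_or_eq_neg_inv_of_apply_eq_smul hq hS he hd) ha
    by_cases hac : a = c
    · exact admissibleEigenvalues_subset_succ i (hac ▸ ha)
    simp only [not_exists] at hSe
    have hAE := apply_conj_eigenvector_eq_smul hS hA hB hac
    set E := S e + ((q - q⁻¹) * c / (a - c)) • e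
    have hE : E ≠ 0 := fun h => hSe _ <| by rw [neg_smul]; exact eq_neg_of_add_eq_zero_left h
    refine admissibleEigenvalues_subset_succ i (ih (by omega) hE (fun k hk => ?_) hAE)
    rcases hk.lt_or_eq with hk | rfl
    · obtain ⟨b, hb⟩ := hcommon k (by omega)
      exact ⟨b, apply_add_smul_eq_smul_of_commute ((commute_σgen_JMn I hk).map ρ) hb _⟩
    · exact ⟨c, hAE⟩

end Eigenvalues

theorem JM_spectrum_bound_general
    (m n : ℕ) (q : ℂ) (hq : q ≠ 0) (v : Fin m → ℂ)
    (V : Type*) [AddCommGroup V] [Module ℂ V]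
    (ρ : Hecke m n q v →ₐ[ℂ] Module.End ℂ V)
    (e : V) (he : e ≠ 0) (a : Fin n → ℂ)
    (hev : ∀ i : Fin n, ρ (JM m n q v i) e = a i • e) :
    ∀ i : Fin n, ∃ (k : Fin m) (z : ℤ),
      -(i.val : ℤ) ≤ z ∧ z ≤ (i.val : ℤ) ∧ a i = v k * q ^ (2 * z) := fun i =>
  eigenvalue_JMn_mem_admissibleEigenvalues ρ hq i.isLt he
    (fun k hk => ⟨a ⟨k, by omega⟩, hev ⟨k, by omega⟩⟩) (hev i)

/-- Proposition 3.4.  In a `C`-representation of `H(m,1,n)`, with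
parameters satisfying the restrictions, the eigenvalue of `J_i` on a common eigenvector
belongs to `{v_k q^{2z} : 1 ≤ k ≤ m, 1−i ≤ z ≤ i−1}` (1-based `i`; for `i : Fin n`
this reads `−i.val ≤ z ≤ i.val`). -/
theorem JM_spectrum_bound
    (m n : ℕ) (hm : 1 ≤ m) (hn : 1 ≤ n) (q : ℂ) (hq : q ≠ 0) (v : Fin m → ℂ)
    (hres : Restrictions m n q v)
    (V : Type*) [AddCommGroup V] [Module ℂ V] [FiniteDimensional ℂ V]
    (ρ : Hecke m n q v →ₐ[ℂ] Module.End ℂ V) (hρ : IsCRep ρ)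
    (e : V) (he : e ≠ 0) (a : Fin n → ℂ)
    (hev : ∀ i : Fin n, ρ (JM m n q v i) e = a i • e) :
    ∀ i : Fin n, ∃ (k : Fin m) (z : ℤ),
      -(i.val : ℤ) ≤ z ∧ z ≤ (i.val : ℤ) ∧ a i = v k * q ^ (2 * z) :=
  JM_spectrum_bound_general m n q hq v V ρ e he a hev

end CHA
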